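/- arXiv:1811.06799 — 5 statements merged into one kernel-verified Lean document; each statement's English description precedes it below -/
import Mathlib

section
/- For all integers c ≥ 2 and ℓ ≥ 1, if the edges of a complete graph on c^(cℓ−1) vertices are colored with c colors, then there exists a set of ℓ vertices all of whose pairwise connecting edges have the same color. -/
/-!
Erdős–Szekeres-style induction on the target sizes: in a set of `c ^ (n₁ + ⋯ + n_c)` vertices,
the edges from the least vertex `x` split into `c` color classes, one of which has at least
`c ^ (n₁ + ⋯ + n_c - 1)` vertices by pigeonhole. If that class has color `j`, recurse on it with
`n_j` lowered by one; a monochromatic set of color `j` found there extends by `x`. Taking every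
`n_j = ℓ - 1` uses only `c ^ (c * (ℓ - 1)) ≤ c ^ (c * ℓ - 1)` vertices.
-/

open Finset

variable {α κ : Type*}

/-- Only the values `f x y` with `x < y` are read, so `f` colors the unordered pairs. -/
def IsMonochromaticOn [LinearOrder α] (f : α → α → κ) (S : Finset α) (j : κ) : Prop :=
  ∀ x ∈ S, ∀ y ∈ S, x < y → f x y = j

namespace IsMonochromaticOn

variable [LinearOrder α] {f : α → α → κ} {S : Finset α} {j : κ}

theorem singleton (f : α → α → κ) (x : α) (j : κ) : IsMonochromaticOn f {x} j := by
  intro a ha b hb hab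
  rw [mem_singleton] at ha hb
  subst ha hb
  exact absurd hab (lt_irrefl _)

theorem insert_of_lt {x : α} (hS : IsMonochromaticOn f S j) (hlt : ∀ y ∈ S, x < y)
    (hx : ∀ y ∈ S, f x y = j) : IsMonochromaticOn f (insert x S) j := by
  intro a ha b hb hab
  rcases mem_insert.mp ha with rfl | haS <;> rcases mem_insert.mp hb with rfl | hbS
  · exact absurd hab (lt_irrefl _)
  · exact hx b hbS
  · exact absurd (hlt a haS) hab.not_gt
  · exact hS a haS b hbS hab

end IsMonochromaticOn

theorem exists_pow_le_card_fiber {ι : Type*} [Fintype κ] [DecidableEq κ]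
    (hκ : 2 ≤ Fintype.card κ) (g : ι → κ) {s : Finset ι} {n : ℕ}
    (hs : Fintype.card κ ^ (n + 1) ≤ #s + 1) : ∃ j, Fintype.card κ ^ n ≤ #{i ∈ s | g i = j} := by
  obtain ⟨c, hc⟩ : ∃ c, Fintype.card κ = c := ⟨_, rfl⟩
  rw [hc] at hκ hs ⊢
  have hpow : c * (c ^ n - 1) + c = c ^ (n + 1) := by
    have : 1 ≤ c ^ n := Nat.one_le_pow _ _ (by omega)
    rw [Nat.mul_sub_one, pow_succ', Nat.sub_add_cancel (Nat.le_mul_of_pos_right c this)]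
  have hlt : #(univ : Finset κ) * (c ^ n - 1) < #s := by
    rw [card_univ, hc]
    omega
  obtain ⟨j, -, hj⟩ := exists_lt_card_fiber_of_mul_lt_card_of_maps_to (fun i _ => mem_univ (g i)) hlt
  exact ⟨j, by omega⟩

theorem exists_min'_color_class_pow_le_card [LinearOrder α] [Fintype κ] [DecidableEq κ]
    (hκ : 2 ≤ Fintype.card κ) (f : α → α → κ) {A : Finset α} (hne : A.Nonempty) {s : ℕ}
    (hA : Fintype.card κ ^ (s + 1) ≤ #A) :
    ∃ j, ∃ B ⊆ A, Fintype.card κ ^ s ≤ #B ∧ ∀ y ∈ B, A.min' hne < y ∧ f (A.min' hne) y = j := by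
  set x := A.min' hne
  have hxA : x ∈ A := A.min'_mem hne
  obtain ⟨j, hj⟩ := exists_pow_le_card_fiber hκ (f x) (s := A.erase x) (n := s)
    (by rw [card_erase_of_mem hxA]; omega)
  refine ⟨j, _, (filter_subset _ _).trans (erase_subset x A), hj, fun y hy => ?_⟩
  obtain ⟨⟨hyx, hyA⟩, hfy⟩ := by simpa only [mem_filter, mem_erase] using hy
  exact ⟨lt_of_le_of_ne (A.min'_le y hyA) (Ne.symm hyx), hfy⟩

theorem sum_update_pred [Fintype κ] [DecidableEq κ] {n : κ → ℕ} {j : κ} {s : ℕ}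
    (hs : ∑ i, n i = s + 1) (hj : 0 < n j) : ∑ i, Function.update n j (n j - 1) i = s := by
  have := add_sum_erase univ n (mem_univ j)
  rw [sum_update_of_mem (mem_univ j), sdiff_singleton_eq_erase]
  omega

theorem exists_isMonochromaticOn_of_pow_sum_le_card [LinearOrder α] [Fintype κ] [DecidableEq κ]
    (hκ : 2 ≤ Fintype.card κ) (f : α → α → κ) (n : κ → ℕ) (A : Finset α)
    (hA : Fintype.card κ ^ ∑ j, n j ≤ #A) :
    ∃ j, ∃ S ⊆ A, #S = n j + 1 ∧ IsMonochromaticOn f S j := by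
  obtain ⟨s, hs⟩ : ∃ s, ∑ j, n j = s := ⟨_, rfl⟩
  rw [hs] at hA
  induction s generalizing n A with
  | zero =>
    have : Nonempty κ := Fintype.card_pos_iff.mp (by omega)
    obtain ⟨x, hx⟩ := card_pos.mp (by simpa using hA)
    let j := Classical.arbitrary κ
    exact ⟨j, {x}, singleton_subset_iff.mpr hx, by simp [sum_eq_zero_iff.mp hs j (mem_univ j)],
      .singleton f x j⟩
  | succ s ih =>
    have hne : A.Nonempty := card_pos.mp (lt_of_lt_of_le (Nat.pow_pos (by omega)) hA)
    have hxA : A.min' hne ∈ A := A.min'_mem hne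
    obtain ⟨j, B, hBA, hB, hxB⟩ := exists_min'_color_class_pow_le_card hκ f hne hA
    rcases Nat.eq_zero_or_pos (n j) with hnj | hnj
    · exact ⟨j, {A.min' hne}, singleton_subset_iff.mpr hxA, by simp [hnj], .singleton f _ j⟩
    obtain ⟨j', S, hSB, hS, hmono⟩ := ih _ B hB (sum_update_pred hs hnj)
    by_cases hjj : j' = j
    · subst hjj
      have hxS : A.min' hne ∉ S := fun h => lt_irrefl _ (hxB _ (hSB h)).1
      refine ⟨j', insert _ S, insert_subset hxA (hSB.trans hBA), ?_,
        hmono.insert_of_lt (fun y hy => (hxB y (hSB hy)).1) (fun y hy => (hxB y (hSB hy)).2)⟩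
      rw [card_insert_of_notMem hxS, hS, Function.update_self]
      omega
    · exact ⟨j', S, hSB.trans hBA, by rwa [Function.update_of_ne hjj] at hS, hmono⟩

/-- Multicolor Ramsey bound: for `c ≥ 2` and `ℓ ≥ 1`, any `c`-coloring of the edges
of a complete graph on `c ^ (c*ℓ - 1)` vertices has a monochromatic set of `ℓ` vertices. -/
theorem ramsey_bound (c ℓ : ℕ) (hc : 2 ≤ c) (hℓ : 1 ≤ ℓ)
    (f : Fin (c ^ (c * ℓ - 1)) → Fin (c ^ (c * ℓ - 1)) → Fin c) :
    ∃ (S : Finset (Fin (c ^ (c * ℓ - 1)))) (col : Fin c),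
      S.card = ℓ ∧ ∀ i ∈ S, ∀ j ∈ S, i < j → f i j = col := by
  have hexp : c * (ℓ - 1) ≤ c * ℓ - 1 := by
    rw [Nat.mul_sub_one]
    omega
  obtain ⟨col, S, -, hS, hmono⟩ :=
    exists_isMonochromaticOn_of_pow_sum_le_card (κ := Fin c) (by simpa using hc) f (fun _ => ℓ - 1)
      univ (by simpa [mul_comm] using Nat.pow_le_pow_right (by omega) hexp)
  exact ⟨S, col, by omega, hmono⟩
end

section
/- Let G = (L,R,E) be a bipartite graph. If both the ladder index and the co-matching index of G are strictly less than ℓ, then the semi-ladder index of G is strictly less than R²(ℓ), where R²(ℓ) is the 2-color Ramsey number guaranteeing a monochromatic set of size ℓ. -/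
/-! Colour each pair `i < j` of a semi-ladder by whether `a i` is adjacent to `b j`. A monochromatic
set of size `ℓ` gives a sub-semi-ladder in which the entries above the diagonal are all edges, which
is a co-matching, or all non-edges, which is a ladder. -/

/-- A ladder of order `n` in the bipartite graph given by `E : L → R → Prop`. -/
def IsLadder {L R : Type*} (E : L → R → Prop) (n : ℕ) (a : Fin n → L) (b : Fin n → R) : Prop :=
  ∀ i j, E (a i) (b j) ↔ j < i

/-- A co-matching of order `n`. -/
def IsCoMatching {L R : Type*} (E : L → R → Prop) (n : ℕ) (a : Fin n → L) (b : Fin n → R) : Prop :=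
  ∀ i j, E (a i) (b j) ↔ i ≠ j

/-- A semi-ladder of order `n`. -/
def IsSemiLadder {L R : Type*} (E : L → R → Prop) (n : ℕ) (a : Fin n → L) (b : Fin n → R) : Prop :=
  (∀ i j, j < i → E (a i) (b j)) ∧ ∀ i, ¬ E (a i) (b i)

/-- `N` satisfies the `c`-color Ramsey property for monochromatic sets of size `ℓ`. -/
def RamseyProp (N c ℓ : ℕ) : Prop :=
  ∀ f : Fin N → Fin N → Fin c, ∃ (S : Finset (Fin N)) (col : Fin c),
    S.card = ℓ ∧ ∀ i ∈ S, ∀ j ∈ S, i < j → f i j = col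

section SemiLadder

variable {L R : Type*} {E : L → R → Prop} {m n : ℕ} {a : Fin n → L} {b : Fin n → R}

theorem IsSemiLadder.comp (h : IsSemiLadder E n a b) {e : Fin m → Fin n} (he : StrictMono e) :
    IsSemiLadder E m (a ∘ e) (b ∘ e) :=
  ⟨fun _ _ hji => h.1 _ _ (he hji), fun i => h.2 (e i)⟩

theorem IsSemiLadder.isCoMatching (h : IsSemiLadder E n a b)
    (hup : ∀ i j, i < j → E (a i) (b j)) : IsCoMatching E n a b := by
  intro i j
  refine ⟨fun hE hij => h.2 i (hij ▸ hE), fun hij => ?_⟩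
  rcases hij.lt_or_gt with hlt | hgt
  · exact hup i j hlt
  · exact h.1 i j hgt

theorem IsSemiLadder.isLadder (h : IsSemiLadder E n a b)
    (hup : ∀ i j, i < j → ¬ E (a i) (b j)) : IsLadder E n a b := by
  intro i j
  refine ⟨fun hE => ?_, h.1 i j⟩
  rcases lt_trichotomy j i with hlt | rfl | hgt
  · exact hlt
  · exact absurd hE (h.2 j)
  · exact absurd hE (hup i j hgt)

end SemiLadder

theorem RamseyProp.exists_strictMono {N ℓ : ℕ} (hRam : RamseyProp N 2 ℓ)
    (P : Fin N → Fin N → Prop) :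
    ∃ e : Fin ℓ → Fin N, StrictMono e ∧
      ((∀ i j, i < j → P (e i) (e j)) ∨ ∀ i j, i < j → ¬ P (e i) (e j)) := by
  classical
  obtain ⟨S, col, hcard, hmono⟩ := hRam fun i j => if P i j then 0 else 1
  let e := S.orderEmbOfFin hcard
  have hcol : ∀ i j, i < j → (if P (e i) (e j) then (0 : Fin 2) else 1) = col :=
    fun i j hij => hmono _ (S.orderEmbOfFin_mem hcard i) _ (S.orderEmbOfFin_mem hcard j)
      (e.strictMono hij)
  refine ⟨e, e.strictMono, ?_⟩
  fin_cases col
  · exact .inl fun i j hij => by simpa using hcol i j hij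
  · exact .inr fun i j hij => by simpa using hcol i j hij

/-- If both the ladder index and the co-matching index of a bipartite graph are
strictly less than `ℓ`, then its semi-ladder index is strictly less than `R²(ℓ)`. -/
theorem semiLadder_of_ladder_and_coMatching {L R : Type*} (E : L → R → Prop) (ℓ R2 : ℕ)
    (hRam : RamseyProp R2 2 ℓ)
    (hLad : ¬ ∃ (a : Fin ℓ → L) (b : Fin ℓ → R), IsLadder E ℓ a b)
    (hCo : ¬ ∃ (a : Fin ℓ → L) (b : Fin ℓ → R), IsCoMatching E ℓ a b) :
    ¬ ∃ (a : Fin R2 → L) (b : Fin R2 → R), IsSemiLadder E R2 a b := by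
  rintro ⟨a, b, hsemi⟩
  obtain ⟨e, he, hup | hup⟩ := hRam.exists_strictMono fun i j => E (a i) (b j)
  · exact hCo ⟨a ∘ e, b ∘ e, (hsemi.comp he).isCoMatching hup⟩
  · exact hLad ⟨a ∘ e, b ∘ e, (hsemi.comp he).isLadder hup⟩
end

section
/- Let E ⊆ X × R be a relation with semi-ladder index strictly less than ℓ, let k ≥ 2, and let f₁,…,f_k : X → X be functions (arising from permutations of tuple coordinates). Define F ⊆ X × R by (a,b) ∈ F iff (fⱼ(a),b) ∈ E for some j ∈ {1,…,k}. Then the semi-ladder index of F is strictly less than k^(ℓ−1). -/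
open Finset

lemma Fin.strictMono_snoc {α : Type*} [Preorder α] {n : ℕ} {s : Fin n → α} {t : α}
    (hs : StrictMono s) (ht : ∀ i, s i < t) : StrictMono (Fin.snoc s t : Fin (n + 1) → α) := by
  intro p q hpq
  obtain ⟨p, rfl⟩ := Fin.exists_castSucc_eq.2 (Fin.ne_last_of_lt hpq)
  induction q using Fin.lastCases with
  | last => simpa using ht p
  | cast q => simpa using hs (Fin.castSucc_lt_castSucc_iff.1 hpq)

theorem exists_strictMono_forall_lt_color_eq {ι κ : Type*} [LinearOrder ι] [Fintype κ]
    (hκ : 2 ≤ Fintype.card κ) (c : ι → ι → κ) (m : ℕ) (S : Finset ι)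
    (hS : Fintype.card κ ^ m ≤ #S) :
    ∃ (s : Fin (m + 1) → ι) (col : Fin (m + 1) → κ),
      StrictMono s ∧ (∀ p, s p ∈ S) ∧ ∀ p q, q < p → c (s p) (s q) = col p := by
  classical
  induction m generalizing S with
  | zero =>
    obtain ⟨x, hx⟩ : S.Nonempty := card_pos.1 (by simpa using hS)
    exact ⟨fun _ => x, fun _ => c x x, fun p q h => by omega, fun _ => hx, fun p q h => by omega⟩
  | succ m ih =>
    rw [pow_succ'] at hS
    have hκm : Fintype.card κ ≤ Fintype.card κ * Fintype.card κ ^ m :=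
      Nat.le_mul_of_pos_right _ (Nat.pow_pos (by omega))
    have hne : S.Nonempty := card_pos.1 (by omega)
    set t := S.max' hne
    have hcard : #(univ : Finset κ) * (Fintype.card κ ^ m - 1) < #(S.erase t) := by
      rw [card_univ, card_erase_of_mem (S.max'_mem hne), Nat.mul_sub_one]
      omega
    obtain ⟨y, -, hy⟩ := exists_lt_card_fiber_of_mul_lt_card_of_maps_to
      (fun j _ => mem_univ (c t j)) hcard
    obtain ⟨s, col, hs, hsS, hcol⟩ := ih {j ∈ S.erase t | c t j = y} (by omega)
    have hsS' (i) : s i ∈ S.erase t ∧ c t (s i) = y := mem_filter.1 (hsS i)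
    refine ⟨Fin.snoc s t, Fin.snoc col y,
      Fin.strictMono_snoc hs fun i => S.lt_max'_of_mem_erase_max' hne (hsS' i).1, fun p => ?_,
      fun p q hqp => ?_⟩
    · induction p using Fin.lastCases with
      | last => simpa using S.max'_mem hne
      | cast p => simpa using mem_of_mem_erase (hsS' p).1
    · obtain ⟨q, rfl⟩ := Fin.exists_castSucc_eq.2 (Fin.ne_last_of_lt hqp)
      induction p using Fin.lastCases with
      | last => simpa using (hsS' q).2
      | cast p => simpa using hcol p q (Fin.castSucc_lt_castSucc_iff.1 hqp)

/-- If `E ⊆ X × R` has semi-ladder index less than `ℓ`, `k ≥ 2`, and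
`F a b ↔ ∃ j, E (f j a) b` for functions `f₁, …, f_k : X → X`, then
the semi-ladder index of `F` is less than `k ^ (ℓ - 1)`. -/
theorem semiLadder_disjunction {X R : Type*} (E : X → R → Prop) (ℓ k : ℕ) (hk : 2 ≤ k)
    (f : Fin k → X → X)
    (hE : ¬ ∃ (a : Fin ℓ → X) (b : Fin ℓ → R), IsSemiLadder E ℓ a b)
    (F : X → R → Prop) (hF : ∀ a b, F a b ↔ ∃ j : Fin k, E (f j a) b) :
    ¬ ∃ (a : Fin (k ^ (ℓ - 1)) → X) (b : Fin (k ^ (ℓ - 1)) → R),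
        IsSemiLadder F (k ^ (ℓ - 1)) a b := by
  cases ℓ with
  | zero => exact absurd ⟨Fin.elim0, Fin.elim0, fun i => i.elim0, fun i => i.elim0⟩ hE
  | succ l =>
    rintro ⟨a, b, hab, hdiag⟩
    have hcolor (i j) : ∃ c : Fin k, j < i → E (f c (a i)) (b j) :=
      if h : j < i then ((hF _ _).1 (hab i j h)).imp fun _ hc _ => hc
      else ⟨⟨0, by omega⟩, fun h' => absurd h' h⟩
    choose c hc using hcolor
    obtain ⟨s, col, hs, -, hcol⟩ :=
      exists_strictMono_forall_lt_color_eq (by simpa using hk) c l univ (by simp)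
    refine hE ⟨fun p => f (col p) (a (s p)), fun p => b (s p), fun p q hqp => ?_, fun p h => ?_⟩
    · show E (f (col p) (a (s p))) (b (s q))
      rw [← hcol p q hqp]
      exact hc _ _ (hs hqp)
    · exact hdiag (s p) ((hF _ _).2 ⟨col p, h⟩)
end

section
/- Fix t ≥ 1 and let G = (V,E) be a K_{t,t}-free graph. For any S ⊆ V with |S| ≤ m, the number of distinct sets of the form N(u) ∩ S over u ∈ V \ S is at most O(m^t); more precisely, it is bounded by the number of subsets of S of size less than t, plus (t−1)·m^t. -/
def KttFree {V : Type*} (G : SimpleGraph V) (t : ℕ) : Prop :=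
  ¬ ∃ (A B : Finset V), Disjoint A B ∧ A.card = t ∧ B.card = t ∧
      ∀ a ∈ A, ∀ b ∈ B, G.Adj a b

/-!
A trace of size less than `t` is one of the small subsets of `S`. A trace of size at least `t`
contains some `t`-subset `B ⊆ S`, and the vertices outside `S` whose trace contains `B` are all
adjacent to every vertex of `B`; by `K_{t,t}`-freeness there are fewer than `t` of them, so `B`
lies in at most `t - 1` traces. Summing over the `(|S| choose t) ≤ m^t` choices of `B` bounds the
large traces.
-/

open Finset

section

variable {V : Type*} {G : SimpleGraph V} {t : ℕ}

theorem Set.exists_finset_subset_card_eq {A : Set V} {k : ℕ} (hk : k ≤ A.encard) :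
    ∃ B : Finset V, ↑B ⊆ A ∧ #B = k := by
  obtain ⟨B, hBA, hBk⟩ := Set.exists_subset_encard_eq hk
  obtain ⟨B, rfl⟩ := (Set.finite_of_encard_eq_coe hBk).exists_finset_coe
  exact ⟨B, hBA, by simpa using hBk⟩

theorem KttFree.encard_lt_of_forall_adj (hG : KttFree G t) {A : Set V} {B : Finset V}
    (hB : #B = t) (hAB : Disjoint A B) (hadj : ∀ a ∈ A, ∀ b ∈ B, G.Adj a b) :
    A.encard < t := by
  by_contra! htA
  obtain ⟨A', hA'A, hA't⟩ := Set.exists_finset_subset_card_eq htA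
  exact hG ⟨A', B, disjoint_coe.mp (hAB.mono_left hA'A), hA't, hB, fun a ha => hadj a (hA'A ha)⟩

def neighborTraces (G : SimpleGraph V) (S : Finset V) : Set (Set V) :=
  {A | ∃ u, u ∉ S ∧ A = {v | v ∈ S ∧ G.Adj u v}}

theorem encard_neighborTraces_superset_lt (hG : KttFree G t) {S B : Finset V} (hBS : B ⊆ S)
    (hB : #B = t) : {A ∈ neighborTraces G S | ↑B ⊆ A}.encard < t := by
  set U := {u | u ∉ S ∧ ∀ b ∈ B, G.Adj u b}
  have hU : U.encard < t := hG.encard_lt_of_forall_adj hB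
    (Set.disjoint_left.mpr fun u hu hub => hu.1 (hBS hub)) fun u hu => hu.2
  have hsub : {A ∈ neighborTraces G S | ↑B ⊆ A} ⊆ (fun u => {v | v ∈ S ∧ G.Adj u v}) '' U := by
    rintro _ ⟨⟨u, hu, rfl⟩, hBA⟩
    exact ⟨u, ⟨hu, fun b hb => (hBA hb).2⟩, rfl⟩
  exact ((Set.encard_le_encard hsub).trans (Set.encard_image_le _ U)).trans_lt hU

theorem encard_setOf_subset_encard_lt (S : Finset V) (t : ℕ) :
    {A : Set V | A ⊆ S ∧ A.encard < t}.encard = #{T ∈ S.powerset | #T < t} := by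
  classical
  rw [← Set.encard_coe_eq_coe_finsetCard, ← coe_injective.encard_image]
  congr 1
  ext A
  simp only [Set.mem_ofPred_eq, coe_filter, mem_powerset, Set.mem_image]
  constructor
  · rintro ⟨hAS, hAt⟩
    obtain ⟨T, rfl⟩ := (S.finite_toSet.subset hAS).exists_finset_coe
    exact ⟨T, ⟨coe_subset.mp hAS, by simpa using hAt⟩, rfl⟩
  · rintro ⟨T, ⟨hTS, hTt⟩, rfl⟩
    exact ⟨by simpa using hTS, by simpa using hTt⟩

theorem encard_neighborTraces_le (hG : KttFree G t) (S : Finset V) :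
    (neighborTraces G S).encard ≤ #{T ∈ S.powerset | #T < t} + (t - 1) * (#S).choose t := by
  have hcover : neighborTraces G S ⊆ {A : Set V | A ⊆ S ∧ A.encard < t} ∪
      ⋃ B ∈ S.powersetCard t, {A ∈ neighborTraces G S | ↑B ⊆ A} := by
    intro A hA
    have hAS : A ⊆ S := by
      obtain ⟨u, -, rfl⟩ := hA
      exact fun v hv => hv.1
    by_cases hAt : A.encard < t
    · exact Or.inl ⟨hAS, hAt⟩
    obtain ⟨B, hBA, hB⟩ := Set.exists_finset_subset_card_eq (not_lt.mp hAt)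
    refine Or.inr (Set.mem_biUnion (mem_powersetCard.mpr ⟨?_, hB⟩) ⟨hA, hBA⟩)
    exact coe_subset.mp (hBA.trans hAS)
  calc (neighborTraces G S).encard
      ≤ {A : Set V | A ⊆ S ∧ A.encard < t}.encard +
          ∑ B ∈ S.powersetCard t, {A ∈ neighborTraces G S | ↑B ⊆ A}.encard :=
        (Set.encard_le_encard hcover).trans <| (Set.encard_union_le _ _).trans <|
          by gcongr; exact set_encard_biUnion_le _ _
    _ ≤ #{T ∈ S.powerset | #T < t} + ∑ B ∈ S.powersetCard t, ((t - 1 : ℕ) : ℕ∞) := by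
        rw [encard_setOf_subset_encard_lt]
        gcongr with B hB
        rw [mem_powersetCard] at hB
        exact (ENat.le_sub_one_of_lt (encard_neighborTraces_superset_lt hG hB.1 hB.2)).trans_eq
          (by norm_cast)
    _ = _ := by simp [mul_comm]

end

theorem kttFree_trace_bound_general {V : Type*} (G : SimpleGraph V) (t : ℕ)
    (hG : KttFree G t) (m : ℕ) (S : Finset V) (hS : S.card ≤ m) :
    ({A : Set V | ∃ u, u ∉ S ∧ A = {v | v ∈ S ∧ G.Adj u v}}).Finite ∧
    ({A : Set V | ∃ u, u ∉ S ∧ A = {v | v ∈ S ∧ G.Adj u v}}).ncard ≤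
      (S.powerset.filter (fun T => T.card < t)).card + (t - 1) * m ^ t := by
  have hchoose : (#S).choose t ≤ m ^ t :=
    (Nat.choose_le_choose t hS).trans (Nat.choose_le_pow m t)
  have h : (neighborTraces G S).encard ≤
      ↑((S.powerset.filter (fun T => T.card < t)).card + (t - 1) * m ^ t) := by
    refine (encard_neighborTraces_le hG S).trans ?_
    push_cast
    gcongr
    exact_mod_cast hchoose
  exact Set.encard_le_coe_iff_finite_ncard_le.mp h

/-- In a `K_{t,t}`-free graph, the number of distinct neighborhood traces `N(u) ∩ S`
over vertices `u ∉ S` is at most the number of subsets of `S` of size less than `t`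
plus `(t-1)·m^t`, where `|S| ≤ m`. -/
theorem kttFree_trace_bound {V : Type*} (G : SimpleGraph V) (t : ℕ) (ht : 1 ≤ t)
    (hG : KttFree G t) (m : ℕ) (S : Finset V) (hS : S.card ≤ m) :
    ({A : Set V | ∃ u, u ∉ S ∧ A = {v | v ∈ S ∧ G.Adj u v}}).Finite ∧
    ({A : Set V | ∃ u, u ∉ S ∧ A = {v | v ∈ S ∧ G.Adj u v}}).ncard ≤
      (S.powerset.filter (fun T => T.card < t)).card + (t - 1) * m ^ t :=
  kttFree_trace_bound_general G t hG m S hS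
end

section
/- Let H = (L,R,E) be a bipartite graph with ladder index strictly less than ℓ, and let p ≥ 1. Define H' to be the bipartite graph whose left part is L, whose right part is the family of subsets P ⊆ R with |P| ≤ p, and where a ∈ L is adjacent to P iff a is adjacent in H to every element of P. Then the ladder index of H' is strictly less than R^p(2ℓ), the p-color Ramsey number guaranteeing a monochromatic set of size 2ℓ. -/
/-!
Given a ladder `(aᵢ, Pᵢ)` of order `R^p(2ℓ)` in `H'`, for `i ≤ j` the vertex `aᵢ` has a
non-neighbour in `Pⱼ`; colour the pair `i < j` by the position of such a non-neighbour in a fixed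
enumeration of `Pⱼ` by `Fin p`. A monochromatic set of size `2ℓ`, split into alternate elements
`u₀ < v₀ < u₁ < v₁ < ⋯`, gives for each `j` one vertex `bⱼ ∈ P_{vⱼ}` missed by every `a_{uᵢ}`
with `i ≤ j`, while `a_{uᵢ}` sees all of `P_{vⱼ}` when `j < i`. So `(a_{uᵢ}, bⱼ)` is a ladder of
order `ℓ` in `H`.
-/

section

variable {L R : Type*}

/-- The adjacency relation of `H'`. -/
def AllAdj (E : L → R → Prop) (x : L) (Q : Finset R) : Prop :=
  ∀ y ∈ Q, E x y

theorem Finset.exists_interleaved {α : Type*} [LinearOrder α] {S : Finset α} {ℓ : ℕ}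
    (hS : S.card = 2 * ℓ) :
    ∃ u v : Fin ℓ → α, (∀ k, u k ∈ S) ∧ (∀ k, v k ∈ S) ∧
      (∀ i j, i ≤ j → u i < v j) ∧ ∀ i j, j < i → v j < u i := by
  let s := S.orderEmbOfFin hS
  refine ⟨fun k => s ⟨2 * k, by omega⟩, fun k => s ⟨2 * k + 1, by omega⟩,
    fun k => S.orderEmbOfFin_mem hS _, fun k => S.orderEmbOfFin_mem hS _,
    fun i j hij => s.lt_iff_lt.2 ?_, fun i j hji => s.lt_iff_lt.2 ?_⟩
  all_goals simp only [Fin.mk_lt_mk]; omega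

namespace IsLadder

variable {E : L → R → Prop} {n : ℕ} {a : Fin n → L} {P : Fin n → Finset R}

theorem exists_not_adj (hlad : IsLadder (AllAdj E) n a P) {i j : Fin n} (hij : i ≤ j) :
    ∃ x ∈ P j, ¬ E (a i) x := by
  by_contra! h
  exact ((hlad i j).1 h).not_ge hij

theorem exists_not_adj_witness (hlad : IsLadder (AllAdj E) n a P) :
    ∃ w : Fin n → Fin n → R, (∀ i j, w i j ∈ P j) ∧ ∀ i j, i ≤ j → ¬ E (a i) (w i j) := by
  have h : ∀ i j, ∃ x ∈ P j, i ≤ j → ¬ E (a i) x := by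
    intro i j
    by_cases hij : i ≤ j
    · obtain ⟨x, hx, hnx⟩ := hlad.exists_not_adj hij
      exact ⟨x, hx, fun _ => hnx⟩
    · obtain ⟨x, hx, -⟩ := hlad.exists_not_adj (le_refl j)
      exact ⟨x, hx, fun h => absurd h hij⟩
  choose w hwP hwE using h
  exact ⟨w, hwP, hwE⟩

theorem of_interleaved (hlad : IsLadder (AllAdj E) n a P) {ℓ : ℕ} {u v : Fin ℓ → Fin n}
    (hvu : ∀ i j, j < i → v j < u i) {b : Fin ℓ → R} (hb : ∀ j, b j ∈ P (v j))
    (hnadj : ∀ i j, i ≤ j → ¬ E (a (u i)) (b j)) :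
    IsLadder E ℓ (a ∘ u) b := fun i j =>
  ⟨fun hE => not_le.1 fun hij => hnadj i j hij hE,
    fun hji => (hlad (u i) (v j)).2 (hvu i j hji) (b j) (hb j)⟩

end IsLadder

end

theorem ladder_index_powerGraph_general {L R : Type*} (E : L → R → Prop) (ℓ p Rp : ℕ)
    (hRam : RamseyProp Rp p (2 * ℓ))
    (hLad : ¬ ∃ (a : Fin ℓ → L) (b : Fin ℓ → R), IsLadder E ℓ a b) :
    ¬ ∃ (a : Fin Rp → L) (P : Fin Rp → Finset R),
        (∀ i, (P i).card ≤ p) ∧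
        ∀ i j, (∀ x ∈ P j, E (a i) x) ↔ j < i := by
  rintro ⟨a, P, hcard, hadj⟩
  have hlad : IsLadder (AllAdj E) Rp a P := hadj
  obtain ⟨w, hwP, hwE⟩ := hlad.exists_not_adj_witness
  let code j : P j ↪ Fin p := (P j).equivFin.toEmbedding.trans (Fin.castLEEmb (hcard j))
  obtain ⟨S, col, hS, hmono⟩ := hRam fun i j => code j ⟨w i j, hwP i j⟩
  obtain ⟨u, v, huS, hvS, huv, hvu⟩ := S.exists_interleaved hS
  have hcollapse : ∀ i j, i ≤ j → w (u i) (v j) = w (u j) (v j) := fun i j hij =>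
    congrArg Subtype.val <| (code (v j)).injective <|
      (hmono _ (huS i) _ (hvS j) (huv i j hij)).trans
        (hmono _ (huS j) _ (hvS j) (huv j j le_rfl)).symm
  refine hLad ⟨a ∘ u, fun j => w (u j) (v j), hlad.of_interleaved hvu (fun j => hwP _ _) ?_⟩
  intro i j hij
  rw [← hcollapse i j hij]
  exact hwE _ _ (huv i j hij).le

/-- If `H` has ladder index less than `ℓ` and `p ≥ 1`, then the auxiliary bipartite graph
`H'` (left part `L`, right part the sets `P ⊆ R` with `|P| ≤ p`, with `a` adjacent to `P`
iff `a` is adjacent in `H` to every element of `P`) has ladder index less than `R^p(2ℓ)`. -/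
theorem ladder_index_powerGraph {L R : Type*} (E : L → R → Prop) (ℓ p Rp : ℕ) (hp : 1 ≤ p)
    (hRam : RamseyProp Rp p (2 * ℓ))
    (hLad : ¬ ∃ (a : Fin ℓ → L) (b : Fin ℓ → R), IsLadder E ℓ a b) :
    ¬ ∃ (a : Fin Rp → L) (P : Fin Rp → Finset R),
        (∀ i, (P i).card ≤ p) ∧
        ∀ i j, (∀ x ∈ P j, E (a i) x) ↔ j < i :=
  ladder_index_powerGraph_general E ℓ p Rp hRam hLad
end
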